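/- Let H be a finite simple hypergraph and C a full cover of H (every edge of H is a subset of some member of C). Then Tr H = min( ∧_{c∈C} Tr(H_c) ), where H_c is the subhypergraph of edges of H contained in c, and ∧ denotes the iterated wedge operation (unions, one transversal from each factor). -/
import Mathlib


variable {α : Type*} [DecidableEq α]

/-- `T` is a hitting set of the family `S`. -/
def Hits (S : Set (Finset α)) (T : Finset α) : Prop := ∀ s ∈ S, (T ∩ s).Nonempty

/-- `T` is a minimal hitting set (transversal) of `S`. -/
def IsMHS (S : Set (Finset α)) (T : Finset α) : Prop :=
  Hits S T ∧ ∀ T' ⊂ T, ¬ Hits S T'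

/-- The transversal hypergraph: the family of all minimal hitting sets of `S`. -/
def Tr (S : Set (Finset α)) : Set (Finset α) := {T | IsMHS S T}

/-- The inclusion-minimal members of a family. -/
def minFam (F : Set (Finset α)) : Set (Finset α) := {e ∈ F | ∀ f ∈ F, f ⊆ e → f = e}

lemma hits_mono {S : Set (Finset α)} {T T' : Finset α} (h : Hits S T') (hsub : T' ⊆ T) :
    Hits S T := fun s hs => (h s hs).mono (Finset.inter_subset_inter hsub le_rfl)

lemma hits_anti {S S' : Set (Finset α)} {T : Finset α} (h : Hits S T) (hsub : S' ⊆ S) :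
    Hits S' T := fun s hs => h s (hsub hs)

lemma exists_mhs_subset {S : Set (Finset α)} {T : Finset α} (h : Hits S T) :
    ∃ T' ⊆ T, IsMHS S T' := by
  induction T using Finset.strongInduction with
  | _ T ih =>
    by_cases hmin : ∀ T' ⊂ T, ¬ Hits S T'
    · exact ⟨T, subset_rfl, h, hmin⟩
    · push_neg at hmin
      obtain ⟨T', hT', hh⟩ := hmin
      obtain ⟨T'', h1, h2⟩ := ih T' hT' hh
      exact ⟨T'', h1.trans hT'.subset, h2⟩

/-- Full-cover decomposition: `Tr H = min (⋀_{c ∈ C} Tr H_c)` for a full cover `C` of a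
finite simple hypergraph `H`, where `H_c = {e ∈ H | e ⊆ c}`. -/
theorem fullCover_decomp (H : Set (Finset α)) (hfin : H.Finite)
    (hsimple : ∀ e₁ ∈ H, ∀ e₂ ∈ H, e₁ ⊆ e₂ → e₁ = e₂)
    (C : Finset (Finset α)) (hcover : ∀ e ∈ H, ∃ c ∈ C, e ⊆ c) :
    Tr H = minFam {T | ∃ g : Finset α → Finset α,
      (∀ c ∈ C, g c ∈ Tr {e ∈ H | e ⊆ c}) ∧ T = C.sup g} := by
  set F : Set (Finset α) := {T | ∃ g : Finset α → Finset α,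
      (∀ c ∈ C, g c ∈ Tr {e ∈ H | e ⊆ c}) ∧ T = C.sup g} with hF
  -- every member of F hits H
  have memF_hits : ∀ T ∈ F, Hits H T := by
    rintro T ⟨g, hg, rfl⟩ e he
    obtain ⟨c, hc, hec⟩ := hcover e he
    have := (hg c hc).1 e ⟨he, hec⟩
    exact this.mono (Finset.inter_subset_inter (Finset.le_sup hc) le_rfl)
  -- every member of Tr H belongs to F
  have trH_memF : ∀ T ∈ Tr H, T ∈ F := by
    rintro T ⟨hT, hTmin⟩
    have hhits : ∀ c : Finset α, Hits {e ∈ H | e ⊆ c} T :=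
      fun c => hits_anti hT (fun e he => he.1)
    choose g hgsub hgmhs using fun c => exists_mhs_subset (hhits c)
    have hsub : C.sup g ⊆ T := Finset.sup_le fun c _ => hgsub c
    have hhit : Hits H (C.sup g) := by
      intro e he
      obtain ⟨c, hc, hec⟩ := hcover e he
      have := (hgmhs c).1 e ⟨he, hec⟩
      exact this.mono (Finset.inter_subset_inter (Finset.le_sup hc) le_rfl)
    have heq : C.sup g = T := by
      by_contra hne
      exact hTmin (C.sup g) (lt_of_le_of_ne hsub hne) hhit
    exact ⟨g, fun c _ => hgmhs c, heq.symm⟩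
  ext T
  constructor
  · intro hT
    refine ⟨trH_memF T hT, ?_⟩
    intro T' hT' hsub
    by_contra hne
    exact hT.2 T' (lt_of_le_of_ne hsub hne) (memF_hits T' hT')
  · rintro ⟨hTF, hTmin⟩
    refine ⟨memF_hits T hTF, ?_⟩
    intro T' hT' hh
    obtain ⟨T'', hsub, hmhs⟩ := exists_mhs_subset hh
    have : T'' = T := hTmin T'' (trH_memF T'' hmhs) (hsub.trans hT'.subset)
    exact absurd (this ▸ hsub) (fun h => hT'.not_subset (this ▸ h))
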